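/- Inverse source operator bound: let (λₙ) be positive reals with λₙ ≥ λ₁ > 0, α ∈ (0,1), T > 0, and let g : [0,T] → ℝ be measurable with g ≥ c_g > 0. Define μₙ = ∫₀^T s^{α−1} E_{α,α}(−λₙ s^α) g(T−s) ds. Then μₙ ≥ c_g λₙ^{−1}(1 − E_{α,1}(−λₙ T^α)) > 0, and consequently 1/(λₙ μₙ) ≤ c_g^{−1} (1 − E_{α,1}(−λ₁ T^α))^{−1} for all n. -/

import Mathlib

/-- Two-parameter Mittag-Leffler function (real arguments). -/
noncomputable def ML (α β x : ℝ) : ℝ := ∑' k : ℕ, x ^ k / Real.Gamma (α * k + β)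

/-!
Since `g ≥ c_g` and the kernel `s^{α-1} E_{α,α}(-λ s^α)` is positive, `μₙ` dominates `c_g` times
the integral of the kernel, which the integral identity evaluates to `λₙ⁻¹ (1 - E_{α,1}(-λₙ T^α))`.
Hence `λₙ μₙ ≥ c_g (1 - E_{α,1}(-λₙ T^α)) ≥ c_g (1 - E_{α,1}(-λ₁ T^α))` by monotonicity of
`E_{α,1}(-·)`, and the last factor is positive because it is `λ₁` times the integral of the positive
kernel at `λ₁`; that kernel is integrable because the one at `λₙ ≥ λ₁` is, after rescaling `s`.
-/

open MeasureTheory Set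

/-- The substitution `s = c t` with `c = (l₁ / l₀) ^ (1 / α) ≤ 1` turns the kernel with
parameter `l₀` on `[0, T / c] ⊇ [0, T]` into `c ^ (α - 1)` times the kernel with parameter `l₁`. -/
theorem IntervalIntegrable.rpow_mul_comp_mul_rpow_of_le {α T l₀ l₁ : ℝ} {F : ℝ → ℝ}
    (hα : 0 < α) (hT : 0 ≤ T) (hl₁ : 0 < l₁) (hle : l₁ ≤ l₀)
    (hF : IntervalIntegrable (fun s => s ^ (α - 1) * F (l₀ * s ^ α)) volume 0 T) :
    IntervalIntegrable (fun s => s ^ (α - 1) * F (l₁ * s ^ α)) volume 0 T := by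
  have hl₀ : 0 < l₀ := hl₁.trans_le hle
  have hq : 0 < l₁ / l₀ := div_pos hl₁ hl₀
  set c : ℝ := (l₁ / l₀) ^ (1 / α)
  have hc : 0 < c := Real.rpow_pos_of_pos hq _
  have hc1 : c ≤ 1 :=
    Real.rpow_le_one hq.le (div_le_one_of_le₀ hle hl₀.le) (by positivity)
  have hcα : c ^ α = l₁ / l₀ := by
    rw [← Real.rpow_mul hq.le, one_div_mul_cancel hα.ne', Real.rpow_one]
  have hscaled : IntervalIntegrable
      (fun t => c ^ (1 - α) * ((c * t) ^ (α - 1) * F (l₀ * (c * t) ^ α))) volume 0 T := by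
    have h := hF.comp_mul_left (c := c)
    rw [zero_div] at h
    refine (h.mono_set (uIcc_subset_uIcc left_mem_uIcc ?_)).const_mul _
    exact mem_uIcc_of_le hT ((le_div_iff₀ hc).2 (by nlinarith))
  refine hscaled.congr_uIoo fun t htT => ?_
  have ht : 0 ≤ t := (uIoo_of_le hT ▸ htT).1.le
  have hpow : c ^ (1 - α) * c ^ (α - 1) = 1 := by
    rw [← Real.rpow_add hc]; norm_num
  simp only [Real.mul_rpow hc.le ht, hcα]
  rw [← mul_assoc, ← mul_assoc, hpow, one_mul]
  congr 2
  field_simp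

theorem intervalIntegral_rpow_mul_comp_mul_rpow_pos {α T l : ℝ} {F : ℝ → ℝ} (hT : 0 < T)
    (hl : 0 ≤ l) (hF : ∀ x, 0 ≤ x → 0 < F x)
    (hint : IntervalIntegrable (fun s => s ^ (α - 1) * F (l * s ^ α)) volume 0 T) :
    0 < ∫ s in (0 : ℝ)..T, s ^ (α - 1) * F (l * s ^ α) :=
  intervalIntegral.intervalIntegral_pos_of_pos_on hint
    (fun _ hs => mul_pos (Real.rpow_pos_of_pos hs.1 _)
      (hF _ (mul_nonneg hl (Real.rpow_nonneg hs.1.le _)))) hT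

theorem one_sub_ML_pos_of_intervalIntegrable {α T l : ℝ} (hT : 0 < T) (hl : 0 < l)
    (hEpos : ∀ t : ℝ, 0 ≤ t → 0 < ML α α (-t))
    (hidentity : ∫ s in (0 : ℝ)..T, s ^ (α - 1) * ML α α (-(l * s ^ α)) =
      l⁻¹ * (1 - ML α 1 (-(l * T ^ α))))
    (hint : IntervalIntegrable (fun s => s ^ (α - 1) * ML α α (-(l * s ^ α))) volume 0 T) :
    0 < 1 - ML α 1 (-(l * T ^ α)) := by
  have h := intervalIntegral_rpow_mul_comp_mul_rpow_pos (F := fun x => ML α α (-x))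
    hT hl.le hEpos hint
  rw [hidentity] at h
  exact pos_of_mul_pos_right h (inv_pos.2 hl).le

theorem mul_intervalIntegral_le_intervalIntegral_mul {f g : ℝ → ℝ} {a b c : ℝ} (hab : a ≤ b)
    (hf : IntervalIntegrable f volume a b)
    (hfg : IntervalIntegrable (fun x => f x * g x) volume a b)
    (hf0 : ∀ x ∈ Icc a b, 0 ≤ f x) (hg : ∀ x ∈ Icc a b, c ≤ g x) :
    c * ∫ x in a..b, f x ≤ ∫ x in a..b, f x * g x := by
  rw [← intervalIntegral.integral_const_mul]
  refine intervalIntegral.integral_mono_on hab (hf.const_mul c) hfg fun x hx => ?_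
  rw [mul_comm]
  exact mul_le_mul_of_nonneg_left (hg x hx) (hf0 x hx)

theorem inverse_source_operator_bound_general (α T c_g lam₁ : ℝ) (hα0 : 0 < α)
    (hT : 0 < T) (hcg : 0 < c_g) (hlam₁ : 0 < lam₁)
    (lam : ℕ → ℝ) (hlam : ∀ n, lam₁ ≤ lam n)
    (g : ℝ → ℝ) (hg : ∀ s, c_g ≤ g s)
    (hint : ∀ n, IntervalIntegrable
      (fun s => s ^ (α - 1) * ML α α (-(lam n * s ^ α)) * g (T - s))
      MeasureTheory.volume 0 T)
    (hint' : ∀ n, IntervalIntegrable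
      (fun s => s ^ (α - 1) * ML α α (-(lam n * s ^ α))) MeasureTheory.volume 0 T)
    (hEpos : ∀ t : ℝ, 0 ≤ t → 0 < ML α α (-t))
    (hidentity : ∀ l : ℝ, 0 < l →
      ∫ s in (0 : ℝ)..T, s ^ (α - 1) * ML α α (-(l * s ^ α)) =
        l⁻¹ * (1 - ML α 1 (-(l * T ^ α))))
    (hanti : AntitoneOn (fun x : ℝ => ML α 1 (-x)) (Set.Ici 0)) :
    ∀ n : ℕ,
      c_g * (lam n)⁻¹ * (1 - ML α 1 (-(lam n * T ^ α))) ≤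
        (∫ s in (0 : ℝ)..T, s ^ (α - 1) * ML α α (-(lam n * s ^ α)) * g (T - s)) ∧
      0 < (∫ s in (0 : ℝ)..T, s ^ (α - 1) * ML α α (-(lam n * s ^ α)) * g (T - s)) ∧
      1 / (lam n * ∫ s in (0 : ℝ)..T, s ^ (α - 1) * ML α α (-(lam n * s ^ α)) * g (T - s)) ≤
        c_g⁻¹ * (1 - ML α 1 (-(lam₁ * T ^ α)))⁻¹ := by
  intro n
  set μ := ∫ s in (0 : ℝ)..T, s ^ (α - 1) * ML α α (-(lam n * s ^ α)) * g (T - s)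
  have hl : 0 < lam n := hlam₁.trans_le (hlam n)
  have hE₁ : 0 < 1 - ML α 1 (-(lam₁ * T ^ α)) :=
    one_sub_ML_pos_of_intervalIntegrable hT hlam₁ hEpos (hidentity lam₁ hlam₁)
      ((hint' n).rpow_mul_comp_mul_rpow_of_le (F := fun x => ML α α (-x))
        hα0 hT.le hlam₁ (hlam n))
  have hE_mono : 1 - ML α 1 (-(lam₁ * T ^ α)) ≤ 1 - ML α 1 (-(lam n * T ^ α)) := by
    have hT' : 0 ≤ T ^ α := Real.rpow_nonneg hT.le α
    exact sub_le_sub_left (hanti (mem_Ici.2 (by positivity)) (mem_Ici.2 (by positivity))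
      (mul_le_mul_of_nonneg_right (hlam n) hT')) 1
  have hlow : c_g * (lam n)⁻¹ * (1 - ML α 1 (-(lam n * T ^ α))) ≤ μ := by
    rw [mul_assoc, ← hidentity _ hl]
    exact mul_intervalIntegral_le_intervalIntegral_mul (g := fun s => g (T - s)) hT.le
      (hint' n) (hint n)
      (fun s hs => mul_nonneg (Real.rpow_nonneg hs.1 _)
        (hEpos _ (mul_nonneg hl.le (Real.rpow_nonneg hs.1 _))).le)
      (fun s _ => hg (T - s))
  have hEn : 0 < 1 - ML α 1 (-(lam n * T ^ α)) := hE₁.trans_le hE_mono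
  have hμ : 0 < μ := lt_of_lt_of_le (by positivity) hlow
  refine ⟨hlow, hμ, ?_⟩
  rw [one_div, ← mul_inv]
  refine inv_anti₀ (by positivity) ?_
  calc c_g * (1 - ML α 1 (-(lam₁ * T ^ α)))
      ≤ c_g * (1 - ML α 1 (-(lam n * T ^ α))) := by gcongr
    _ = lam n * (c_g * (lam n)⁻¹ * (1 - ML α 1 (-(lam n * T ^ α)))) := by field_simp
    _ ≤ lam n * μ := by gcongr

/-- Inverse source operator bound (Lemma 3.1, scalar level): with `g ≥ c_g > 0`,
`μₙ = ∫₀^T s^{α−1}E_{α,α}(−λₙ s^α) g(T−s) ds ≥ c_g λₙ⁻¹(1 − E_{α,1}(−λₙT^α)) > 0`, and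
`1/(λₙ μₙ) ≤ c_g⁻¹ (1 − E_{α,1}(−λ₁T^α))⁻¹`. -/
theorem inverse_source_operator_bound (α T c_g lam₁ : ℝ) (hα0 : 0 < α) (hα1 : α < 1)
    (hT : 0 < T) (hcg : 0 < c_g) (hlam₁ : 0 < lam₁)
    (lam : ℕ → ℝ) (hlam : ∀ n, lam₁ ≤ lam n)
    (g : ℝ → ℝ) (hgmeas : Measurable g) (hg : ∀ s, c_g ≤ g s)
    (hint : ∀ n, IntervalIntegrable
      (fun s => s ^ (α - 1) * ML α α (-(lam n * s ^ α)) * g (T - s))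
      MeasureTheory.volume 0 T)
    (hint' : ∀ n, IntervalIntegrable
      (fun s => s ^ (α - 1) * ML α α (-(lam n * s ^ α))) MeasureTheory.volume 0 T)
    (hEpos : ∀ t : ℝ, 0 ≤ t → 0 < ML α α (-t))
    (hidentity : ∀ l : ℝ, 0 < l →
      ∫ s in (0 : ℝ)..T, s ^ (α - 1) * ML α α (-(l * s ^ α)) =
        l⁻¹ * (1 - ML α 1 (-(l * T ^ α))))
    (hanti : AntitoneOn (fun x : ℝ => ML α 1 (-x)) (Set.Ici 0))
    (hrange : ∀ x : ℝ, 0 ≤ x → ML α 1 (-x) ∈ Set.Ioc (0 : ℝ) 1) :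
    ∀ n : ℕ,
      c_g * (lam n)⁻¹ * (1 - ML α 1 (-(lam n * T ^ α))) ≤
        (∫ s in (0 : ℝ)..T, s ^ (α - 1) * ML α α (-(lam n * s ^ α)) * g (T - s)) ∧
      0 < (∫ s in (0 : ℝ)..T, s ^ (α - 1) * ML α α (-(lam n * s ^ α)) * g (T - s)) ∧
      1 / (lam n * ∫ s in (0 : ℝ)..T, s ^ (α - 1) * ML α α (-(lam n * s ^ α)) * g (T - s)) ≤
        c_g⁻¹ * (1 - ML α 1 (-(lam₁ * T ^ α)))⁻¹ :=
  inverse_source_operator_bound_general α T c_g lam₁ hα0 hT hcg hlam₁ lam hlam g hg hint hint' hEpos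
    hidentity hanti
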